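/- arXiv:1107.2860 — 8 statements merged into one kernel-verified Lean document; each statement's English description precedes it below -/
import Mathlib

section
/- If (a,b,c) is a primitive solution of a² + 2b² = c² (i.e., gcd(a,b)=1) and p is a prime dividing c, then there exist integers u, v with p = u² + 2v². -/
/-!
If `p ∣ c` then `p ∣ a² + 2b²`, and `p ∤ b` since `gcd(a, b) = 1`, so `-2` is a square modulo
`p`: there is `r` with `p ∣ r² + 2`, and reducing `r` symmetrically modulo `p` gives `m p = x² + 2y²` with `0 < m < p`.
Fermat's descent then lowers `m` to `1`: reducing `x, y` symmetrically modulo `m` to `x', y'` gives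
`m k = x'² + 2y'²` with `0 < k < m`, and the composition law
`(x² + 2y²)(x'² + 2y'²) = (xx' + 2yy')² + 2(xy' - yx')²` has both squares divisible by `m`,
so `k p` is again of the form `u² + 2v²`.
-/

theorem Int.four_mul_bmod_sq_le (x : ℤ) {m : ℕ} (hm : 0 < m) : 4 * x.bmod m ^ 2 ≤ (m : ℤ) ^ 2 := by
  have hle := Int.bmod_le (x := x) hm
  have hge := Int.le_bmod (x := x) hm
  have : -(m : ℤ) ≤ 2 * x.bmod m ∧ 2 * x.bmod m ≤ m := by omega
  nlinarith

theorem Int.bmod_modEq (x : ℤ) (m : ℕ) : x.bmod m ≡ x [ZMOD m] := Int.bmod_emod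

theorem Nat.Prime.exists_lt_of_mul_eq_sq_add_two_mul_sq {p m : ℕ} (hp : p.Prime) (hm : 1 < m)
    (hmp : m < p) {x y : ℤ} (h : (m * p : ℤ) = x ^ 2 + 2 * y ^ 2) :
    ∃ k : ℕ, 0 < k ∧ k < m ∧ ∃ u v : ℤ, (k * p : ℤ) = u ^ 2 + 2 * v ^ 2 := by
  set x' := x.bmod m
  set y' := y.bmod m
  have hx : x' ≡ x [ZMOD m] := Int.bmod_modEq x m
  have hy : y' ≡ y [ZMOD m] := Int.bmod_modEq y m
  have hm0 : (0 : ℤ) < m := by exact_mod_cast (zero_lt_one.trans hm)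
  have hxy : x ^ 2 + 2 * y ^ 2 ≡ 0 [ZMOD m] := Int.modEq_zero_iff_dvd.mpr ⟨p, h.symm⟩
  obtain ⟨k, hk⟩ : (m : ℤ) ∣ x' ^ 2 + 2 * y' ^ 2 :=
    Int.modEq_zero_iff_dvd.mp (by calc
      x' ^ 2 + 2 * y' ^ 2 ≡ x ^ 2 + 2 * y ^ 2 [ZMOD m] := by gcongr
      _ ≡ 0 [ZMOD m] := hxy)
  obtain ⟨A, hA⟩ : (m : ℤ) ∣ x * x' + 2 * y * y' :=
    Int.modEq_zero_iff_dvd.mp (by calc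
      x * x' + 2 * y * y' ≡ x * x + 2 * y * y [ZMOD m] := by gcongr
      _ = x ^ 2 + 2 * y ^ 2 := by ring
      _ ≡ 0 [ZMOD m] := hxy)
  obtain ⟨B, hB⟩ : (m : ℤ) ∣ x * y' - y * x' :=
    Int.modEq_zero_iff_dvd.mp (by calc
      x * y' - y * x' ≡ x * y - y * x [ZMOD m] := by gcongr
      _ = 0 := by ring)
  have hkp : k * p = A ^ 2 + 2 * B ^ 2 := by
    have hcomp : (m : ℤ) ^ 2 * (k * p) = (m : ℤ) ^ 2 * (A ^ 2 + 2 * B ^ 2) := by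
      linear_combination (x' ^ 2 + 2 * y' ^ 2) * h - (m : ℤ) * p * hk
        + (x * x' + 2 * y * y' + m * A) * hA + 2 * (x * y' - y * x' + m * B) * hB
    exact mul_left_cancel₀ (pow_ne_zero 2 hm0.ne') hcomp
  have hk_lt : k < m := by
    nlinarith [Int.four_mul_bmod_sq_le x (zero_lt_one.trans hm),
      Int.four_mul_bmod_sq_le y (zero_lt_one.trans hm)]
  have hk_pos : 0 < k := by
    refine lt_of_le_of_ne (by nlinarith [sq_nonneg x', sq_nonneg y']) fun hk0 ↦ ?_
    -- otherwise `m ∣ x` and `m ∣ y`, so `m² ∣ m p` and `m ∣ p`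
    have hx0 : x' = 0 := by nlinarith [sq_nonneg x', sq_nonneg y']
    have hy0 : y' = 0 := by nlinarith [sq_nonneg x', sq_nonneg y']
    obtain ⟨x₀, rfl⟩ : (m : ℤ) ∣ x := by simpa [hx0] using hx.dvd
    obtain ⟨y₀, rfl⟩ : (m : ℤ) ∣ y := by simpa [hy0] using hy.dvd
    have hmp_dvd : (m : ℤ) ∣ p :=
      ⟨x₀ ^ 2 + 2 * y₀ ^ 2, mul_left_cancel₀ hm0.ne' (by rw [h]; ring)⟩
    rcases hp.eq_one_or_self_of_dvd m (Int.natCast_dvd_natCast.mp hmp_dvd) with h1 | h1 <;> omega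
  lift k to ℕ using hk_pos.le
  exact ⟨k, by exact_mod_cast hk_pos, by exact_mod_cast hk_lt, A, B, hkp⟩

theorem Nat.Prime.exists_eq_sq_add_two_mul_sq_of_mul {p m : ℕ} (hp : p.Prime) (hm : 0 < m)
    (hmp : m < p) {x y : ℤ} (h : (m * p : ℤ) = x ^ 2 + 2 * y ^ 2) :
    ∃ u v : ℤ, (p : ℤ) = u ^ 2 + 2 * v ^ 2 := by
  induction m using Nat.strong_induction_on generalizing x y with
  | _ m ih =>
    obtain rfl | hm1 := (Nat.succ_le_of_lt hm).eq_or_lt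
    · exact ⟨x, y, by simpa using h⟩
    · obtain ⟨k, hk, hkm, u, v, hkp⟩ := hp.exists_lt_of_mul_eq_sq_add_two_mul_sq hm1 hmp h
      exact ih k hkm hk (hkm.trans hmp) hkp

theorem Nat.Prime.exists_eq_sq_add_two_mul_sq_of_dvd {p : ℕ} (hp : p.Prime) {r : ℤ}
    (h : (p : ℤ) ∣ r ^ 2 + 2) : ∃ u v : ℤ, (p : ℤ) = u ^ 2 + 2 * v ^ 2 := by
  set x := r.bmod p
  obtain ⟨k, hk⟩ : (p : ℤ) ∣ x ^ 2 + 2 := by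
    have hx : x ^ 2 + 2 ≡ r ^ 2 + 2 [ZMOD p] := by gcongr; exact Int.bmod_modEq r p
    exact (dvd_sub_right h).mp hx.dvd
  have hp0 : (0 : ℤ) < p := by exact_mod_cast hp.pos
  have hbound := Int.four_mul_bmod_sq_le r hp.pos
  have hk_pos : 0 < k := by nlinarith [sq_nonneg x]
  have hk_lt : k < p := by nlinarith [hp.two_le]
  lift k to ℕ using hk_pos.le
  exact hp.exists_eq_sq_add_two_mul_sq_of_mul (m := k) (by exact_mod_cast hk_pos)
    (by exact_mod_cast hk_lt) (x := x) (y := 1) (by linear_combination -hk)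

theorem exists_dvd_sq_add_two_of_dvd_sq_add_two_mul_sq {p : ℕ} (hp : p.Prime) {a b : ℤ}
    (hab : Int.gcd a b = 1) (h : (p : ℤ) ∣ a ^ 2 + 2 * b ^ 2) : ∃ r : ℤ, (p : ℤ) ∣ r ^ 2 + 2 := by
  have := Fact.mk hp
  have hb : (b : ZMod p) ≠ 0 := by
    rw [Ne, ZMod.intCast_zmod_eq_zero_iff_dvd]
    intro hpb
    have hpa : (p : ℤ) ∣ a := (Nat.prime_iff_prime_int.mp hp).dvd_of_dvd_pow (n := 2)
      (by simpa using dvd_sub h ((hpb.pow two_ne_zero).mul_left 2))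
    have := Int.dvd_coe_gcd hpa hpb
    rw [hab] at this
    exact hp.one_lt.ne' (Nat.dvd_one.mp (Int.natCast_dvd_natCast.mp this))
  obtain ⟨r, hr⟩ := ZMod.intCast_surjective ((a : ZMod p) / (b : ZMod p))
  refine ⟨r, (ZMod.intCast_zmod_eq_zero_iff_dvd _ p).mp ?_⟩
  have hab' : ((a ^ 2 + 2 * b ^ 2 : ℤ) : ZMod p) = 0 := (ZMod.intCast_zmod_eq_zero_iff_dvd _ p).mpr h
  push_cast at hab' ⊢
  rw [hr]
  field_simp
  linear_combination hab'

theorem stmt_0_general (a b c : ℤ) (h : a^2 + 2*b^2 = c^2)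
    (hprim : Int.gcd a b = 1) (p : ℕ) (hp : Nat.Prime p) (hpc : (p : ℤ) ∣ c) :
    ∃ u v : ℤ, (p : ℤ) = u^2 + 2*v^2 := by
  have hdvd : (p : ℤ) ∣ a ^ 2 + 2 * b ^ 2 := h ▸ dvd_pow hpc two_ne_zero
  obtain ⟨r, hr⟩ := exists_dvd_sq_add_two_of_dvd_sq_add_two_mul_sq hp hprim hdvd
  exact hp.exists_eq_sq_add_two_mul_sq_of_dvd hr

theorem stmt_0 (a b c : ℤ) (hc : 0 < c) (h : a^2 + 2*b^2 = c^2)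
    (hprim : Int.gcd a b = 1) (p : ℕ) (hp : Nat.Prime p) (hpc : (p : ℤ) ∣ c) :
    ∃ u v : ℤ, (p : ℤ) = u^2 + 2*v^2 :=
  stmt_0_general a b c h hprim p hp hpc
end

section
/- If (a,b,c) is a primitive solution of a² + 3b² = c² and p is a prime dividing c, then either p = 2 or there exist integers u, v with p = u² + 3v². -/
/-!
Modulo an odd prime `p ∣ c`, primitivity gives `p ∤ b`, so `a² + 3b² ≡ 0` makes `-3` a square,
`m² ≡ -3`. Thue's pigeonhole lemma yields `x ≡ m y (mod p)` with `|x|, |y| ≤ √p`, hence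
`p ∣ x² + 3y² < 4p`, i.e. `x² + 3y² = kp` with `k ∈ {1, 2, 3}`. The case `k = 2` is impossible,
since an even value of `x² + 3y²` is divisible by `4`; for `k = 3`, `3 ∣ x` and dividing by `3`
writes `p` in the required form.
-/

theorem ZMod.exists_abs_le_sqrt_intCast_eq_mul (n : ℕ) [NeZero n] (m : ZMod n) :
    ∃ x y : ℤ, (x, y) ≠ 0 ∧ |x| ≤ n.sqrt ∧ |y| ≤ n.sqrt ∧ (x : ZMod n) = m * y := by
  set s := n.sqrt
  let box := Finset.range (s + 1) ×ˢ Finset.range (s + 1)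
  have hcard : (Finset.univ : Finset (ZMod n)).card < box.card := by
    simpa [box, ← sq] using Nat.lt_succ_sqrt' n
  obtain ⟨⟨i, j⟩, hij, ⟨i', j'⟩, hij', hne, heq⟩ :=
    Finset.exists_ne_map_eq_of_card_lt_of_maps_to hcard
      (f := fun ij : ℕ × ℕ => (ij.1 : ZMod n) - m * ij.2) (fun _ _ => Finset.mem_univ _)
  simp only [box, Finset.mem_product, Finset.mem_range] at hij hij'
  refine ⟨(i : ℤ) - i', (j : ℤ) - j', ?_, ?_, ?_, ?_⟩
  · intro h
    simp only [Prod.mk_eq_zero, sub_eq_zero, Nat.cast_inj] at h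
    exact hne (Prod.ext h.1 h.2)
  · rw [abs_le]; constructor <;> omega
  · rw [abs_le]; constructor <;> omega
  · push_cast
    linear_combination heq

theorem Int.four_dvd_sq_add_three_mul_sq {x y : ℤ} (h : 2 ∣ x ^ 2 + 3 * y ^ 2) :
    4 ∣ x ^ 2 + 3 * y ^ 2 := by
  obtain ⟨r, rfl | rfl⟩ := Int.even_or_odd' x <;> obtain ⟨t, rfl | rfl⟩ := Int.even_or_odd' y
  · exact ⟨r ^ 2 + 3 * t ^ 2, by ring⟩
  · have : (2 * r) ^ 2 + 3 * (2 * t + 1) ^ 2 = 2 * (2 * r ^ 2 + 6 * t ^ 2 + 6 * t + 1) + 1 := by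
      ring
    omega
  · have : (2 * r + 1) ^ 2 + 3 * (2 * t) ^ 2 = 2 * (2 * r ^ 2 + 2 * r + 6 * t ^ 2) + 1 := by ring
    omega
  · exact ⟨r ^ 2 + r + 3 * t ^ 2 + 3 * t + 1, by ring⟩

theorem isSquare_neg_three_of_sq_add_three_mul_sq_eq_zero {F : Type*} [Field F] {x y : F}
    (hy : y ≠ 0) (h : x ^ 2 + 3 * y ^ 2 = 0) : IsSquare (-3 : F) :=
  ⟨x / y, by rw [div_mul_div_comm, eq_div_iff (mul_ne_zero hy hy)]; linear_combination -h⟩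

theorem Nat.Prime.sqrt_sq_lt {p : ℕ} (hp : p.Prime) : p.sqrt ^ 2 < p :=
  (Nat.sqrt_le' p).lt_of_ne fun h => hp.prime.not_isSquare ⟨p.sqrt, by rw [← sq, h]⟩

theorem Nat.Prime.exists_eq_sq_add_three_mul_sq {p : ℕ} (hp : p.Prime) (hp2 : p ≠ 2)
    (h : IsSquare (-3 : ZMod p)) : ∃ u v : ℤ, (p : ℤ) = u ^ 2 + 3 * v ^ 2 := by
  have := Fact.mk hp
  obtain ⟨m, hm⟩ := h
  obtain ⟨x, y, hxy, hx, hy, hxm⟩ := ZMod.exists_abs_le_sqrt_intCast_eq_mul p m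
  obtain ⟨k, hk⟩ : (p : ℤ) ∣ x ^ 2 + 3 * y ^ 2 := by
    rw [← ZMod.intCast_zmod_eq_zero_iff_dvd]
    push_cast
    rw [hxm]
    linear_combination (-y ^ 2) * hm
  have hpos : 0 < x ^ 2 + 3 * y ^ 2 := by
    rcases not_and_or.mp (mt Prod.mk_eq_zero.mpr hxy) with hx0 | hy0
    · linarith [sq_pos_of_ne_zero hx0, sq_nonneg y]
    · linarith [sq_pos_of_ne_zero hy0, sq_nonneg x]
  have hlt : x ^ 2 + 3 * y ^ 2 < 4 * p := by
    have hs : (p.sqrt : ℤ) ^ 2 < p := by exact_mod_cast hp.sqrt_sq_lt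
    have hx2 := sq_abs x ▸ pow_le_pow_left₀ (abs_nonneg x) hx 2
    have hy2 := sq_abs y ▸ pow_le_pow_left₀ (abs_nonneg y) hy 2
    linarith
  have hp0 : (0 : ℤ) < p := by exact_mod_cast hp.pos
  obtain ⟨hk0, hk4⟩ : 0 < k ∧ k < 4 := by constructor <;> nlinarith
  interval_cases k
  · exact ⟨x, y, by linarith⟩
  · obtain ⟨t, ht⟩ := Int.four_dvd_sq_add_three_mul_sq ⟨p, by rw [hk, mul_comm]⟩
    have h2p : (2 : ℤ) ∣ p := ⟨t, by linarith⟩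
    exact (hp2 ((Nat.prime_dvd_prime_iff_eq Nat.prime_two hp).mp (mod_cast h2p)).symm).elim
  · obtain ⟨t, rfl⟩ := Int.prime_three.dvd_of_dvd_pow (a := x) (n := 2) ⟨p - y ^ 2, by linarith⟩
    exact ⟨y, t, by linarith⟩

theorem stmt_1_general (a b c : ℤ) (h : a^2 + 3*b^2 = c^2)
    (hprim : Int.gcd a b = 1) (p : ℕ) (hp : Nat.Prime p) (hpc : (p : ℤ) ∣ c) :
    p = 2 ∨ ∃ u v : ℤ, (p : ℤ) = u^2 + 3*v^2 := by
  rcases eq_or_ne p 2 with hp2 | hp2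
  · exact Or.inl hp2
  have := Fact.mk hp
  have hpb : ¬(p : ℤ) ∣ b := fun hb => by
    have hpa : (p : ℤ) ∣ a := Int.Prime.dvd_pow' (k := 2) hp <| by
      rw [eq_sub_of_add_eq h]
      exact dvd_sub (dvd_pow hpc two_ne_zero) ((dvd_pow hb two_ne_zero).mul_left 3)
    have := Int.dvd_coe_gcd hpa hb
    rw [hprim] at this
    exact hp.not_dvd_one (by exact_mod_cast this)
  refine Or.inr (hp.exists_eq_sq_add_three_mul_sq hp2
    (isSquare_neg_three_of_sq_add_three_mul_sq_eq_zero (x := (a : ZMod p)) (y := b) ?_ ?_))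
  · rwa [Ne, ZMod.intCast_zmod_eq_zero_iff_dvd]
  · have hc : (c : ZMod p) = 0 := (ZMod.intCast_zmod_eq_zero_iff_dvd c p).mpr hpc
    simpa [hc] using congrArg (Int.cast : ℤ → ZMod p) h

theorem stmt_1 (a b c : ℤ) (hc : 0 < c) (h : a^2 + 3*b^2 = c^2)
    (hprim : Int.gcd a b = 1) (p : ℕ) (hp : Nat.Prime p) (hpc : (p : ℤ) ∣ c) :
    p = 2 ∨ ∃ u v : ℤ, (p : ℤ) = u^2 + 3*v^2 :=
  stmt_1_general a b c h hprim p hp hpc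
end

section
/- If (a,b,c) is a primitive solution of a² + 5b² = c² and p is a prime dividing c, then there exist integers u, v with p = u² + 5v² or 2p = u² + 5v². -/
/-!
Since `gcd a b = 1` and `p ∣ a² + 5b²`, `p ∤ b`, so `-5 ≡ (a/b)²` is a square `t²` modulo `p`.
Thue's lemma (pigeonhole on `x - t y` for `0 ≤ x, y ≤ ⌊√p⌋`) gives `u ≡ t v (mod p)` with
`u², v² < p` not both zero, so `u² + 5v² = k p` with `1 ≤ k ≤ 5`. The cases `k = 3, 4, 5`
descend to `k = 2, 1, 1` by explicit identities.
-/

theorem isSquare_neg_of_dvd_sq_add_mul_sq {p : ℕ} (hp : p.Prime) {a b d : ℤ}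
    (hab : Int.gcd a b = 1) (hdvd : (p : ℤ) ∣ a ^ 2 + d * b ^ 2) : IsSquare (-(d : ZMod p)) := by
  have := Fact.mk hp
  have hpb : ¬ (p : ℤ) ∣ b := by
    intro hb
    have ha : (p : ℤ) ∣ a := by
      refine Nat.prime_iff_prime_int.mp hp |>.dvd_of_dvd_pow (n := 2) ?_
      simpa using (dvd_sub hdvd (dvd_mul_of_dvd_right (dvd_pow hb two_ne_zero) d))
    exact hp.not_dvd_one (by exact_mod_cast hab ▸ Int.dvd_coe_gcd ha hb)
  have hb : (b : ZMod p) ≠ 0 := by rwa [Ne, ZMod.intCast_zmod_eq_zero_iff_dvd]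
  have hzero : (a : ZMod p) ^ 2 + d * (b : ZMod p) ^ 2 = 0 := by
    exact_mod_cast (ZMod.intCast_zmod_eq_zero_iff_dvd _ p).mpr hdvd
  refine ⟨a / b, ?_⟩
  field_simp
  linear_combination -hzero

theorem ZMod.exists_small_intCast_eq_mul (m : ℕ) [NeZero m] (t : ZMod m) :
    ∃ u v : ℤ, (u ≠ 0 ∨ v ≠ 0) ∧ u.natAbs ≤ m.sqrt ∧ v.natAbs ≤ m.sqrt ∧ (u : ZMod m) = t * v := by
  have hcard : Fintype.card (ZMod m) < Fintype.card (Fin (m.sqrt + 1) × Fin (m.sqrt + 1)) := by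
    rw [ZMod.card, Fintype.card_prod, Fintype.card_fin, ← sq]
    exact Nat.lt_succ_sqrt' m
  obtain ⟨⟨x₁, y₁⟩, ⟨x₂, y₂⟩, hne, heq⟩ := Fintype.exists_ne_map_eq_of_card_lt
    (fun q : Fin (m.sqrt + 1) × Fin (m.sqrt + 1) => (q.1 : ZMod m) - t * q.2) hcard
  refine ⟨(x₁ : ℤ) - x₂, (y₁ : ℤ) - y₂, ?_, ?_, ?_, ?_⟩
  · contrapose! hne
    simp only [Prod.mk.injEq, Fin.ext_iff]
    omega
  · omega
  · omega
  · push_cast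
    linear_combination heq

theorem exists_dvd_sq_add_mul_sq_lt {p : ℕ} (hp : p.Prime) {d : ℤ} (hd : 0 < d)
    (hsq : IsSquare (-(d : ZMod p))) :
    ∃ u v : ℤ, (p : ℤ) ∣ u ^ 2 + d * v ^ 2 ∧ 0 < u ^ 2 + d * v ^ 2 ∧
      u ^ 2 + d * v ^ 2 < (1 + d) * p := by
  have : NeZero p := ⟨hp.ne_zero⟩
  obtain ⟨t, ht⟩ := hsq
  obtain ⟨u, v, hne, hu, hv, huv⟩ := ZMod.exists_small_intCast_eq_mul p t
  have hsqrt : (p.sqrt : ℤ) ^ 2 < p := by exact_mod_cast hp.sqrt_sq_lt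
  have hu2 : u ^ 2 ≤ (p.sqrt : ℤ) ^ 2 := Int.natAbs_le_iff_sq_le.mp (by simpa using hu)
  have hv2 : v ^ 2 ≤ (p.sqrt : ℤ) ^ 2 := Int.natAbs_le_iff_sq_le.mp (by simpa using hv)
  refine ⟨u, v, ?_, ?_, by nlinarith⟩
  · rw [← ZMod.intCast_zmod_eq_zero_iff_dvd]
    push_cast
    linear_combination (↑u + t * ↑v) * huv - (v : ZMod p) ^ 2 * ht
  · rcases hne with h | h <;> positivity

section Descent

variable {m u v : ℤ}

theorem exists_two_mul_eq_sq_add_five_mul_sq_of_three_mul_eq (h : 3 * m = u ^ 2 + 5 * v ^ 2) :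
    ∃ s t : ℤ, 2 * m = s ^ 2 + 5 * t ^ 2 := by
  have h3 : (3 : ℤ) ∣ (u + v) * (u - v) := ⟨m - 2 * v ^ 2, by linear_combination -h⟩
  rcases Int.prime_three.dvd_mul.mp h3 with ⟨w, hw⟩ | ⟨w, hw⟩
  · obtain rfl : u = 3 * w - v := by linarith
    exact ⟨w - 2 * v, w, by linarith⟩
  · obtain rfl : u = 3 * w + v := by linarith
    exact ⟨w + 2 * v, w, by linarith⟩

theorem exists_eq_sq_add_five_mul_sq_of_four_mul_eq (h : 4 * m = u ^ 2 + 5 * v ^ 2) :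
    ∃ s t : ℤ, m = s ^ 2 + 5 * t ^ 2 := by
  have even_sq : ∀ {x : ℤ}, Even x → 4 ∣ x ^ 2 := fun ⟨y, hy⟩ => ⟨y ^ 2, by rw [hy]; ring⟩
  obtain ⟨⟨x, rfl⟩, ⟨y, rfl⟩⟩ : Even u ∧ Even v := by
    rcases Int.even_or_odd u with hu | hu <;> rcases Int.even_or_odd v with hv | hv
    · exact ⟨hu, hv⟩
    · have := even_sq hu; have := Int.sq_mod_four_eq_one_of_odd hv; omega
    · have := Int.sq_mod_four_eq_one_of_odd hu; have := even_sq hv; omega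
    · have := Int.sq_mod_four_eq_one_of_odd hu; have := Int.sq_mod_four_eq_one_of_odd hv; omega
  exact ⟨x, y, by linarith⟩

theorem exists_eq_sq_add_five_mul_sq_of_five_mul_eq (h : 5 * m = u ^ 2 + 5 * v ^ 2) :
    ∃ s t : ℤ, m = s ^ 2 + 5 * t ^ 2 := by
  have h5 : Prime (5 : ℤ) := by norm_num
  obtain ⟨w, rfl⟩ : (5 : ℤ) ∣ u := h5.dvd_of_dvd_pow (n := 2) ⟨m - v ^ 2, by linear_combination -h⟩
  exact ⟨v, w, by linarith⟩

theorem exists_eq_or_two_mul_eq_sq_add_five_mul_sq_of_dvd (hdvd : m ∣ u ^ 2 + 5 * v ^ 2)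
    (hpos : 0 < u ^ 2 + 5 * v ^ 2) (hlt : u ^ 2 + 5 * v ^ 2 < 6 * m) :
    ∃ s t : ℤ, m = s ^ 2 + 5 * t ^ 2 ∨ 2 * m = s ^ 2 + 5 * t ^ 2 := by
  obtain ⟨k, hk⟩ := hdvd
  rw [mul_comm m k] at hk
  have hm : 0 < m := by linarith
  have hk0 : 0 < k := pos_of_mul_pos_left (hk ▸ hpos) hm.le
  have hk6 : k < 6 := lt_of_mul_lt_mul_right (by linarith) hm.le
  interval_cases k
  · exact ⟨u, v, .inl (by linarith)⟩
  · exact ⟨u, v, .inr (by linarith)⟩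
  · obtain ⟨s, t, h⟩ := exists_two_mul_eq_sq_add_five_mul_sq_of_three_mul_eq hk.symm
    exact ⟨s, t, .inr h⟩
  · obtain ⟨s, t, h⟩ := exists_eq_sq_add_five_mul_sq_of_four_mul_eq hk.symm
    exact ⟨s, t, .inl h⟩
  · obtain ⟨s, t, h⟩ := exists_eq_sq_add_five_mul_sq_of_five_mul_eq hk.symm
    exact ⟨s, t, .inl h⟩

end Descent

theorem stmt_2_general (a b c : ℤ) (h : a^2 + 5*b^2 = c^2)
    (hprim : Int.gcd a b = 1) (p : ℕ) (hp : Nat.Prime p) (hpc : (p : ℤ) ∣ c) :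
    ∃ u v : ℤ, (p : ℤ) = u^2 + 5*v^2 ∨ 2*(p : ℤ) = u^2 + 5*v^2 := by
  have hsq : IsSquare (-((5 : ℤ) : ZMod p)) :=
    isSquare_neg_of_dvd_sq_add_mul_sq hp hprim (h ▸ dvd_pow hpc two_ne_zero)
  obtain ⟨u, v, hdvd, hpos, hlt⟩ := exists_dvd_sq_add_mul_sq_lt hp (by norm_num) hsq
  exact exists_eq_or_two_mul_eq_sq_add_five_mul_sq_of_dvd hdvd hpos (by linarith)

theorem stmt_2 (a b c : ℤ) (hc : 0 < c) (h : a^2 + 5*b^2 = c^2)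
    (hprim : Int.gcd a b = 1) (p : ℕ) (hp : Nat.Prime p) (hpc : (p : ℤ) ∣ c) :
    ∃ u v : ℤ, (p : ℤ) = u^2 + 5*v^2 ∨ 2*(p : ℤ) = u^2 + 5*v^2 :=
  stmt_2_general a b c h hprim p hp hpc
end

section
/- If (a,b,c) is a primitive solution of a² + 6b² = c² and p is a prime dividing c, then there exist integers u, v with p = u² + 6v² or 2p = u² + 6v². -/
/-- Thue's lemma. -/
theorem ZMod.exists_intCast_eq_mul_natAbs_le_sqrt (n : ℕ) [NeZero n] (t : ZMod n) :
    ∃ x y : ℤ, (x, y) ≠ 0 ∧ (x : ZMod n) = t * y ∧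
      x.natAbs ≤ n.sqrt ∧ y.natAbs ≤ n.sqrt := by
  set s := n.sqrt
  have hcard : (Finset.univ : Finset (ZMod n)).card <
      (Finset.range (s + 1) ×ˢ Finset.range (s + 1)).card := by
    rw [Finset.card_univ, ZMod.card, Finset.card_product, Finset.card_range, ← sq]
    exact Nat.lt_succ_sqrt' n
  obtain ⟨⟨i, j⟩, hij, ⟨i', j'⟩, hij', hne, heq⟩ :=
    Finset.exists_ne_map_eq_of_card_lt_of_maps_to hcard
      (f := fun q : ℕ × ℕ => (q.1 : ZMod n) - t * q.2) fun _ _ => Finset.mem_univ _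
  simp only [Finset.mem_product, Finset.mem_range] at hij hij'
  refine ⟨i - i', j - j', ?_, ?_, by omega, by omega⟩
  · simpa [Prod.ext_iff, sub_eq_zero] using hne
  · push_cast
    linear_combination heq

theorem exists_sq_eq_neg_of_dvd_sq_add_mul_sq {p : ℕ} (hp : p.Prime) {a b : ℤ} (d : ℤ)
    (hab : Int.gcd a b = 1) (h : (p : ℤ) ∣ a ^ 2 + d * b ^ 2) : ∃ t : ZMod p, t ^ 2 = -d := by
  have := Fact.mk hp
  have hp' : Prime (p : ℤ) := Nat.prime_iff_prime_int.mp hp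
  have hpb : ¬ (p : ℤ) ∣ b := by
    intro hb
    have ha : (p : ℤ) ∣ a := hp'.dvd_of_dvd_pow (n := 2) <| by
      simpa using dvd_sub h (dvd_mul_of_dvd_right (dvd_pow hb two_ne_zero) d)
    exact hp'.not_isUnit ((Int.isCoprime_iff_gcd_eq_one.mpr hab).isUnit_of_dvd' ha hb)
  have hb : (b : ZMod p) ≠ 0 := by rwa [Ne, ZMod.intCast_zmod_eq_zero_iff_dvd]
  have hab' : (a : ZMod p) ^ 2 + d * (b : ZMod p) ^ 2 = 0 := by
    exact_mod_cast (ZMod.intCast_zmod_eq_zero_iff_dvd _ p).mpr h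
  exact ⟨a / b, by field_simp; linear_combination hab'⟩

theorem exists_sq_add_mul_sq_eq_mul_of_sq_eq_neg {p : ℕ} (hp : p.Prime) {d : ℤ} (hd : 0 < d)
    {t : ZMod p} (ht : t ^ 2 = -d) :
    ∃ x y k : ℤ, x ^ 2 + d * y ^ 2 = k * p ∧ 0 < k ∧ k ≤ d := by
  have := Fact.mk hp
  obtain ⟨x, y, hxy, hx, hxb, hyb⟩ := ZMod.exists_intCast_eq_mul_natAbs_le_sqrt p t
  have hsq : ∀ z : ℤ, z.natAbs ≤ p.sqrt → z ^ 2 < p := fun z hz => by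
    rw [← Int.natAbs_sq]
    exact_mod_cast (Nat.pow_le_pow_left hz 2).trans_lt hp.sqrt_sq_lt
  obtain ⟨k, hk⟩ : (p : ℤ) ∣ x ^ 2 + d * y ^ 2 := by
    rw [← ZMod.intCast_zmod_eq_zero_iff_dvd]
    push_cast
    rw [hx]
    linear_combination (y : ZMod p) ^ 2 * ht
  have hpos : 0 < x ^ 2 + d * y ^ 2 := by
    rcases eq_or_ne y 0 with rfl | _
    · have : x ≠ 0 := by simpa using hxy
      positivity
    · positivity
  have hlt : x ^ 2 + d * y ^ 2 < p * (d + 1) := by nlinarith [hsq x hxb, hsq y hyb]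
  have hp0 : (0 : ℤ) ≤ p := by positivity
  rw [hk] at hpos hlt
  exact ⟨x, y, k, by rw [hk, mul_comm], pos_of_mul_pos_right hpos hp0,
    Int.lt_add_one_iff.mp (lt_of_mul_lt_mul_left hlt hp0)⟩

def IsSqAddSixSq (n : ℤ) : Prop := ∃ u v : ℤ, n = u ^ 2 + 6 * v ^ 2

namespace IsSqAddSixSq

variable {n : ℤ}

theorem two_mul_of_three_mul (h : IsSqAddSixSq (3 * n)) : IsSqAddSixSq (2 * n) := by
  obtain ⟨x, y, hxy⟩ := h
  obtain ⟨w, rfl⟩ : (3 : ℤ) ∣ x :=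
    Int.prime_three.dvd_of_dvd_pow (n := 2) ⟨n - 2 * y ^ 2, by linarith⟩
  exact ⟨2 * y, w, by linarith⟩

theorem of_four_mul (h : IsSqAddSixSq (4 * n)) : IsSqAddSixSq n := by
  obtain ⟨x, y, hxy⟩ := h
  obtain ⟨w, rfl⟩ : (2 : ℤ) ∣ x :=
    Int.prime_two.dvd_of_dvd_pow (n := 2) ⟨2 * n - 3 * y ^ 2, by linarith⟩
  obtain ⟨z, rfl⟩ : (2 : ℤ) ∣ y :=
    Int.prime_two.dvd_of_dvd_pow (n := 2) ⟨n - w ^ 2 - y ^ 2, by linarith⟩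
  exact ⟨w, z, by linarith⟩

/-- Composition with `10 = 2² + 6·1²`: `10(x² + 6y²) = (2x + 6y)² + 6(x - 2y)²`. -/
theorem two_mul_of_five_mul_of_dvd {x y : ℤ} (hxy : 5 * n = x ^ 2 + 6 * y ^ 2)
    (h : 5 ∣ x - 2 * y) : IsSqAddSixSq (2 * n) := by
  obtain ⟨m, hm⟩ := h
  refine ⟨2 * (y + m), m, mul_left_cancel₀ (by norm_num : (5 : ℤ) ≠ 0) ?_⟩
  linear_combination 2 * hxy + 2 * (x + 2 * y + 5 * m) * hm

theorem two_mul_of_five_mul (h : IsSqAddSixSq (5 * n)) : IsSqAddSixSq (2 * n) := by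
  obtain ⟨x, y, hxy⟩ := h
  have : (5 : ℤ) ∣ (x - 2 * y) * (x - 2 * -y) := ⟨n - 2 * y ^ 2, by linarith⟩
  rcases (Int.prime_iff_natAbs_prime.mpr (by norm_num)).dvd_or_dvd this with h | h
  · exact two_mul_of_five_mul_of_dvd hxy h
  · exact two_mul_of_five_mul_of_dvd (by linarith) h

theorem of_six_mul (h : IsSqAddSixSq (6 * n)) : IsSqAddSixSq n := by
  obtain ⟨x, y, hxy⟩ := h
  have h2 : (2 : ℤ) ∣ x :=
    Int.prime_two.dvd_of_dvd_pow (n := 2) ⟨3 * (n - y ^ 2), by linarith⟩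
  have h3 : (3 : ℤ) ∣ x :=
    Int.prime_three.dvd_of_dvd_pow (n := 2) ⟨2 * (n - y ^ 2), by linarith⟩
  obtain ⟨w, rfl⟩ : (6 : ℤ) ∣ x := by omega
  exact ⟨y, w, by linarith⟩

theorem or_two_mul_of_mul {k : ℤ} (hk : 0 < k) (hk6 : k ≤ 6) (h : IsSqAddSixSq (k * n)) :
    IsSqAddSixSq n ∨ IsSqAddSixSq (2 * n) := by
  interval_cases k
  · exact .inl (by simpa using h)
  · exact .inr h
  · exact .inr h.two_mul_of_three_mul
  · exact .inl h.of_four_mul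
  · exact .inr h.two_mul_of_five_mul
  · exact .inl h.of_six_mul

end IsSqAddSixSq

theorem stmt_3_general (a b c : ℤ) (h : a^2 + 6*b^2 = c^2)
    (hprim : Int.gcd a b = 1) (p : ℕ) (hp : Nat.Prime p) (hpc : (p : ℤ) ∣ c) :
    ∃ u v : ℤ, (p : ℤ) = u^2 + 6*v^2 ∨ 2*(p : ℤ) = u^2 + 6*v^2 := by
  obtain ⟨t, ht⟩ :=
    exists_sq_eq_neg_of_dvd_sq_add_mul_sq hp 6 hprim (h ▸ dvd_pow hpc two_ne_zero)
  obtain ⟨x, y, k, hxy, hk, hk6⟩ := exists_sq_add_mul_sq_eq_mul_of_sq_eq_neg hp (by norm_num) ht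
  rcases IsSqAddSixSq.or_two_mul_of_mul hk hk6 ⟨x, y, hxy.symm⟩ with
    ⟨u, v, huv⟩ | ⟨u, v, huv⟩
  exacts [⟨u, v, .inl huv⟩, ⟨u, v, .inr huv⟩]

theorem stmt_3 (a b c : ℤ) (hc : 0 < c) (h : a^2 + 6*b^2 = c^2)
    (hprim : Int.gcd a b = 1) (p : ℕ) (hp : Nat.Prime p) (hpc : (p : ℤ) ∣ c) :
    ∃ u v : ℤ, (p : ℤ) = u^2 + 6*v^2 ∨ 2*(p : ℤ) = u^2 + 6*v^2 :=
  stmt_3_general a b c h hprim p hp hpc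
end

section
/- For an odd prime p, there exist integers x, y with 2p = x² + 6y² if and only if there exist integers x, y with p = 2x² + 3y². -/
theorem stmt_7 (p : ℕ) (hp : Nat.Prime p) (hodd : Odd p) :
    (∃ x y : ℤ, 2*(p : ℤ) = x^2 + 6*y^2) ↔ (∃ x y : ℤ, (p : ℤ) = 2*x^2 + 3*y^2) := by
  constructor
  · rintro ⟨x, y, h⟩
    have hx2 : (2 : ℤ) ∣ x ^ 2 := ⟨(p : ℤ) - 3 * y ^ 2, by linarith⟩
    have hx : (2 : ℤ) ∣ x := (Int.Prime.dvd_pow' Nat.prime_two hx2)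
    obtain ⟨a, rfl⟩ := hx
    exact ⟨a, y, by nlinarith⟩
  · rintro ⟨x, y, h⟩
    exact ⟨2 * x, y, by ring_nf; nlinarith⟩
end

section
/- Let q be a positive integer and suppose a, b, x, y are odd integers and k, r positive integers with a² + q·b² = 2^(2k), x² + q·y² = 2^(2r), and k ≤ r. Then 4 divides (a·y − x·b) or 4 divides (a·y + x·b). -/
theorem stmt_17 (q : ℤ) (hqpos : 0 < q) (a b x y : ℤ)
    (ha : Odd a) (hb : Odd b) (hx : Odd x) (hy : Odd y)
    (k r : ℕ) (hk : 0 < k) (hkr : k ≤ r)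
    (h1 : a^2 + q*b^2 = 2^(2*k)) (h2 : x^2 + q*y^2 = 2^(2*r)) :
    4 ∣ (a*y - x*b) ∨ 4 ∣ (a*y + x*b) := by
  obtain ⟨m, hm⟩ := ha.mul hy
  obtain ⟨n, hn⟩ := hx.mul hb
  rcases Int.even_or_odd (m - n) with ⟨c, hc⟩ | ⟨c, hc⟩
  · left; exact ⟨c, by linarith⟩
  · right; exact ⟨n + c + 1, by linarith⟩
end

section
/- Let q be a positive integer and a, b, x, y odd integers, k ≤ r positive integers with a² + q·b² = 2^(2k) and x² + q·y² = 2^(2r). If a·y − x·b = 2^d · R with R an integer and 2 ≤ d ≤ k, then R is even. Consequently, if 4 ∣ (ay − xb), then 2^(k+1) ∣ (ay − xb). -/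
/-!
Write `D = a*y - x*b`. Eliminating `q` gives `D * (a*y + x*b) = 2^(2k) * (y^2 - 2^(2(r-k)) * b^2)`.
If `4 ∣ D`, then `a*y + x*b = D + 2*x*b` is twice an odd number, so `2^(2k-1) ∣ D`, which is at
least `2^(k+1)` once `k ≥ 2`. Evenness of `R` follows by cancelling `2^d` from `2^(k+1) ∣ 2^d * R`.
-/

theorem Int.pow_dvd_of_pow_succ_dvd_mul_add_two_mul {D c : ℤ} {n : ℕ} (hc : Odd c) (hD : 4 ∣ D)
    (h : 2 ^ (n + 1) ∣ D * (D + 2 * c)) : 2 ^ n ∣ D := by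
  obtain ⟨m, rfl⟩ := hD
  have hu : Odd (2 * m + c) := (even_two_mul m).add_odd hc
  have hcop : IsCoprime ((2 : ℤ) ^ n) (2 * m + c) :=
    (Int.prime_two.coprime_iff_not_dvd.mpr
      (Int.not_even_iff_odd.mpr hu ∘ even_iff_two_dvd.mpr)).pow_left
  rw [show 4 * m * (4 * m + 2 * c) = 4 * m * (2 * m + c) * 2 by ring, pow_succ] at h
  exact hcop.dvd_of_dvd_mul_right ((mul_dvd_mul_iff_right two_ne_zero).mp h)

theorem even_of_pow_succ_dvd_two_pow_mul {d k : ℕ} {R : ℤ} (hdk : d ≤ k)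
    (h : 2 ^ (k + 1) ∣ 2 ^ d * R) : Even R := by
  rw [show k + 1 = d + (k + 1 - d) by omega, pow_add] at h
  have hR := (mul_dvd_mul_iff_left (pow_ne_zero d two_ne_zero)).mp h
  exact even_iff_two_dvd.mpr ((dvd_pow_self 2 (by omega)).trans hR)

theorem stmt_18_general (q : ℤ) (a b x y : ℤ)
    (hb : Odd b) (hx : Odd x)
    (k r : ℕ) (hkr : k ≤ r)
    (h1 : a^2 + q*b^2 = 2^(2*k)) (h2 : x^2 + q*y^2 = 2^(2*r)) :
    (∀ (d : ℕ) (R : ℤ), 2 ≤ d → d ≤ k → a*y - x*b = 2^d * R → Even R) ∧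
    ((4 : ℤ) ∣ (a*y - x*b) → (2:ℤ)^(k+1) ∣ (a*y - x*b)) := by
  have hprod : 2 ^ (2 * k) ∣ (a*y - x*b) * ((a*y - x*b) + 2 * (x*b)) := by
    obtain ⟨e, rfl⟩ := Nat.exists_eq_add_of_le hkr
    refine ⟨y^2 - 2^(2*e) * b^2, ?_⟩
    linear_combination y^2 * h1 - b^2 * h2
  have hpow : (4 : ℤ) ∣ (a*y - x*b) → (2:ℤ)^(k+1) ∣ (a*y - x*b) := by
    intro h4
    rcases Nat.lt_or_ge k 2 with hk | hk
    · exact (pow_dvd_pow 2 (by omega : k + 1 ≤ 2)).trans (by norm_num [h4])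
    · refine (pow_dvd_pow 2 (by omega : k + 1 ≤ 2 * k - 1)).trans ?_
      refine Int.pow_dvd_of_pow_succ_dvd_mul_add_two_mul (hx.mul hb) h4 ?_
      rwa [show 2 * k - 1 + 1 = 2 * k by omega]
  refine ⟨fun d R hd hdk hR => even_of_pow_succ_dvd_two_pow_mul hdk ?_, hpow⟩
  rw [← hR]
  exact hpow (hR ▸ (pow_dvd_pow 2 hd).mul_right R)

theorem stmt_18 (q : ℤ) (hqpos : 0 < q) (a b x y : ℤ)
    (ha : Odd a) (hb : Odd b) (hx : Odd x) (hy : Odd y)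
    (k r : ℕ) (hk : 0 < k) (hkr : k ≤ r)
    (h1 : a^2 + q*b^2 = 2^(2*k)) (h2 : x^2 + q*y^2 = 2^(2*r)) :
    (∀ (d : ℕ) (R : ℤ), 2 ≤ d → d ≤ k → a*y - x*b = 2^d * R → Even R) ∧
    ((4 : ℤ) ∣ (a*y - x*b) → (2:ℤ)^(k+1) ∣ (a*y - x*b)) :=
  stmt_18_general q a b x y hb hx k r hkr h1 h2
end

section
/- In the group of rational points on the circle x² + y² = 1 (with addition given by angle addition, i.e., (a,b)+(c,d) = (ac − bd, ad + bc)), every element of finite order is one of (1,0), (−1,0), (0,1), (0,−1). In particular the torsion subgroup is cyclic of order 4. -/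
set_option maxRecDepth 4000


/-- Angle-addition multiplication on rational points of the unit circle. -/
def circAdd (P Q : ℚ × ℚ) : ℚ × ℚ :=
  (P.1 * Q.1 - P.2 * Q.2, P.1 * Q.2 + P.2 * Q.1)

/-- `n`-fold sum (iterated angle addition), with identity `(1,0)`. -/
def circSmul (P : ℚ × ℚ) : ℕ → ℚ × ℚ
  | 0 => (1, 0)
  | n + 1 => circAdd (circSmul P n) P

open Complex in
/-- The embedding of rational circle points into `ℂ`. -/
noncomputable def toC (P : ℚ × ℚ) : ℂ := (P.1 : ℂ) + (P.2 : ℂ) * Complex.I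

lemma toC_add (P Q : ℚ × ℚ) : toC (circAdd P Q) = toC P * toC Q := by
  simp only [toC, circAdd]
  push_cast
  ring_nf
  rw [Complex.I_sq]
  ring

lemma toC_smul (P : ℚ × ℚ) (n : ℕ) : toC (circSmul P n) = toC P ^ n := by
  induction n with
  | zero => simp [circSmul, toC]
  | succ n ih => rw [circSmul, toC_add, ih, pow_succ]

lemma int_unit_circle (x y : ℤ) (h : x ^ 2 + y ^ 2 = 1) :
    (x = 1 ∧ y = 0) ∨ (x = -1 ∧ y = 0) ∨ (x = 0 ∧ y = 1) ∨ (x = 0 ∧ y = -1) := by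
  have h' : x * x + y * y = 1 := by nlinarith
  have hx1 : -1 ≤ x := by nlinarith
  have hx2 : x ≤ 1 := by nlinarith
  have hy1 : -1 ≤ y := by nlinarith
  have hy2 : y ≤ 1 := by nlinarith
  interval_cases x <;> interval_cases y <;> omega

theorem stmt_19 (P : ℚ × ℚ) (hP : P.1^2 + P.2^2 = 1) :
    (∃ n : ℕ, 0 < n ∧ circSmul P n = (1, 0)) ↔
      (P = (1, 0) ∨ P = (-1, 0) ∨ P = (0, 1) ∨ P = (0, -1)) := by
  constructor
  · rintro ⟨n, hn, hcirc⟩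
    obtain ⟨a, b⟩ := P
    simp only at hP ⊢
    -- pass to ℂ
    have hz : toC (a, b) ^ n = 1 := by rw [← toC_smul, hcirc]; simp [toC]
    set ζ : ℂ := toC (a, b) with hζdef
    -- Gaussian integer representation
    set z₀ : GaussianInt := ⟨a.num * (b.den : ℤ), b.num * (a.den : ℤ)⟩ with hz₀
    set q₀ : ℤ := (a.den : ℤ) * (b.den : ℤ) with hq₀
    have hq₀pos : (0 : ℤ) < q₀ := by positivity
    have hq₀C : ((q₀ : GaussianInt) : ℂ) ≠ 0 := by
      rw [show ((q₀ : GaussianInt) : ℂ) = (q₀ : ℂ) by push_cast [GaussianInt.toComplex_def]; simp]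
      exact_mod_cast hq₀pos.ne'
    have hrep : (z₀ : ℂ) = (q₀ : GaussianInt) * ζ := by
      rw [GaussianInt.toComplex_def]
      show _ = ((q₀ : GaussianInt) : ℂ) * _
      rw [show ((q₀ : GaussianInt) : ℂ) = (q₀ : ℂ) by push_cast [GaussianInt.toComplex_def]; simp]
      simp only [hz₀, hζdef, toC, hq₀]
      push_cast
      rw [show (a : ℂ) = (a.num : ℂ) / (a.den : ℂ) by rw [Rat.cast_def],
        show (b : ℂ) = (b.num : ℂ) / (b.den : ℂ) by rw [Rat.cast_def]]
      have had : (a.den : ℂ) ≠ 0 := by exact_mod_cast a.den_nz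
      have hbd : (b.den : ℂ) ≠ 0 := by exact_mod_cast b.den_nz
      field_simp
    -- divide by the gcd
    set g : GaussianInt := EuclideanDomain.gcd z₀ (q₀ : GaussianInt) with hg
    have hgq : g ∣ (q₀ : GaussianInt) := EuclideanDomain.gcd_dvd_right _ _
    have hgz : g ∣ z₀ := EuclideanDomain.gcd_dvd_left _ _
    have hgne : g ≠ 0 := by
      intro h
      rw [hg, EuclideanDomain.gcd_eq_zero_iff] at h
      exact (by exact_mod_cast hq₀pos.ne' (by exact_mod_cast congrArg Zsqrtd.re h.2) : False)
    obtain ⟨z, hzdef⟩ := hgz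
    obtain ⟨w, hwdef⟩ := hgq
    have hgC : (g : ℂ) ≠ 0 := fun h => hgne (GaussianInt.toComplex_injective (by simpa using h))
    have hwC : (w : ℂ) ≠ 0 := by
      intro h
      apply hq₀C
      rw [hwdef, GaussianInt.toComplex_mul, h, mul_zero]
    -- coprimality via Bézout
    have hcop : IsCoprime z w := by
      obtain ⟨A, B, hbez⟩ : ∃ A B, g = z₀ * A + (q₀ : GaussianInt) * B :=
        ⟨_, _, EuclideanDomain.gcd_eq_gcd_ab _ _⟩
      rw [hzdef, hwdef] at hbez
      refine ⟨A, B, ?_⟩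
      have : g * 1 = g * (A * z + B * w) := by
        rw [mul_one]; nth_rewrite 1 [hbez]; ring
      exact (mul_left_cancel₀ hgne this).symm
    -- ζ = z / w in ℂ and z^n = w^n
    have hζzw : (z : ℂ) = ζ * (w : ℂ) := by
      have : (g : ℂ) * (z : ℂ) = (g : ℂ) * (ζ * (w : ℂ)) := by
        rw [← GaussianInt.toComplex_mul, ← hzdef, hrep, hwdef, GaussianInt.toComplex_mul]; ring
      exact mul_left_cancel₀ hgC this
    have hpow : z ^ n = w ^ n := by
      apply GaussianInt.toComplex_injective
      have : ((z ^ n : GaussianInt) : ℂ) = ζ ^ n * ((w ^ n : GaussianInt) : ℂ) := by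
        rw [map_pow, map_pow, hζzw, mul_pow]
      rw [this, hz, one_mul]
    -- both z and w are units
    obtain ⟨m, hm⟩ := Nat.exists_eq_succ_of_ne_zero hn.ne'
    have hzu : IsUnit z := hcop.pow_right.isUnit_of_dvd' dvd_rfl
      ⟨z ^ m, by rw [← hpow, hm, pow_succ, mul_comm]⟩
    have hwu : IsUnit w := hcop.symm.pow_right.isUnit_of_dvd' dvd_rfl
      ⟨w ^ m, by rw [hpow, hm, pow_succ, mul_comm]⟩
    -- hence ζ = v for a Gaussian unit v
    obtain ⟨wu, hwu'⟩ := hwu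
    set v : GaussianInt := z * ↑wu⁻¹ with hv
    have hvu : IsUnit v := hzu.mul (Units.isUnit _)
    have hζv : ζ = (v : ℂ) := by
      have hwinv : (w : ℂ) * ((↑wu⁻¹ : GaussianInt) : ℂ) = 1 := by
        rw [← GaussianInt.toComplex_mul, ← hwu', Units.mul_inv]; simp
      calc ζ = ζ * ((w : ℂ) * ((↑wu⁻¹ : GaussianInt) : ℂ)) := by rw [hwinv, mul_one]
        _ = (z : ℂ) * ((↑wu⁻¹ : GaussianInt) : ℂ) := by rw [hζzw]; ring
        _ = (v : ℂ) := by rw [hv, GaussianInt.toComplex_mul]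
    -- unit means norm one
    have hnorm : v.re ^ 2 + v.im ^ 2 = 1 := by
      have := (Zsqrtd.norm_eq_one_iff' (by norm_num : (-1 : ℤ) ≤ 0) v).mpr hvu
      rw [Zsqrtd.norm_def] at this
      nlinarith [this]
    -- extract a and b
    have hζv' : (a : ℂ) + (b : ℂ) * Complex.I = (v.re : ℂ) + (v.im : ℂ) * Complex.I := by
      rw [← GaussianInt.toComplex_def, ← hζv, hζdef, toC]
    have hre : (a : ℝ) = (v.re : ℝ) := by
      have := congrArg Complex.re hζv'
      simpa using this
    have him : (b : ℝ) = (v.im : ℝ) := by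
      have := congrArg Complex.im hζv'
      simpa using this
    have ha : a = (v.re : ℚ) := by exact_mod_cast hre
    have hb : b = (v.im : ℚ) := by exact_mod_cast him
    have hcases := int_unit_circle v.re v.im hnorm
    rcases hcases with ⟨h1, h2⟩ | ⟨h1, h2⟩ | ⟨h1, h2⟩ | ⟨h1, h2⟩
    · left; rw [Prod.mk.injEq]; norm_num [ha, hb, h1, h2]
    · right; left; rw [Prod.mk.injEq]; norm_num [ha, hb, h1, h2]
    · right; right; left; rw [Prod.mk.injEq]; norm_num [ha, hb, h1, h2]
    · right; right; right; rw [Prod.mk.injEq]; norm_num [ha, hb, h1, h2]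
  · rintro (rfl | rfl | rfl | rfl)
    · exact ⟨1, one_pos, by norm_num [circSmul, circAdd]⟩
    · exact ⟨2, two_pos, by norm_num [circSmul, circAdd]⟩
    · exact ⟨4, by norm_num, by norm_num [circSmul, circAdd]⟩
    · exact ⟨4, by norm_num, by norm_num [circSmul, circAdd]⟩
end
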